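/- Fix d ≥ 1, l ≥ 0 and ρ ∈ (0,1]. There exists a constant C = C(d,l,ρ) such that for every h > 0 the following holds: let K₁ and K₂ be simplices in ℝ^d sharing a common facet F (i.e., K₁ = convexHull({a} ∪ S) and K₂ = convexHull({b} ∪ S) for a set S of d points with {a} ∪ S and {b} ∪ S each affinely independent and F = convexHull S), each satisfying diam K_i ≤ h and containing a Euclidean ball of radius ρh. Then for every polynomial function q : ℝ^d → ℝ of degree ≤ l, ∫_{K₁} q² dx ≤ C ( h² ∫_{K₁} ‖∇q‖² dx + ∫_{K₂} q² dx ). -/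

import Mathlib

/-! In fact `∫_{K₁} q² ≲ ∫_{K₂} q²`. As `K₁` and `K₂` share a vertex and have diameter `≤ h`,
`K₁` lies in the ball of radius `2h` about the centre `c` of a ball of radius `ρh` inside `K₂`.
The change of variables `y = c + h • x` preserves the degree of `q`, so it suffices to compare
`∫ P²` over the balls of radii `2` and `ρ / 2` about the origin, uniformly in `P` of degree
`≤ l`. On this finite-dimensional space both sides are continuous and `2`-homogeneous in the
coefficients, and the right one is positive off `0` since a polynomial vanishing on an open set
is zero; compactness of the unit sphere gives the constant. -/

open MeasureTheory Metric

theorem exists_nonneg_forall_le_mul_of_sq_homogeneous {E : Type*} [NormedAddCommGroup E]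
    [NormedSpace ℝ E] [ProperSpace E] {f g : E → ℝ} (hf : Continuous f) (hg : Continuous g)
    (hf_smul : ∀ (t : ℝ) x, f (t • x) = t ^ 2 * f x)
    (hg_smul : ∀ (t : ℝ) x, g (t • x) = t ^ 2 * g x) (hg_pos : ∀ x, x ≠ 0 → 0 < g x) :
    ∃ C, 0 ≤ C ∧ ∀ x, f x ≤ C * g x := by
  have hg_sphere : ∀ u ∈ sphere (0 : E) 1, 0 < g u :=
    fun u hu => hg_pos u (ne_of_mem_sphere hu one_ne_zero)
  obtain ⟨M, hM⟩ := (isCompact_sphere (0 : E) 1).exists_bound_of_continuousOn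
    (hf.continuousOn.div hg.continuousOn fun u hu => (hg_sphere u hu).ne')
  refine ⟨max M 0, le_max_right _ _, fun x => ?_⟩
  rcases eq_or_ne x 0 with rfl | hx
  · have hf0 := hf_smul 0 0
    have hg0 := hg_smul 0 0
    simp only [smul_zero, zero_pow two_ne_zero, zero_mul] at hf0 hg0
    rw [hf0, hg0, mul_zero]
  set u := ‖x‖⁻¹ • x
  have hu : u ∈ sphere (0 : E) 1 := by simp [u, norm_smul, hx]
  have hxu : x = ‖x‖ • u := by simp [u, smul_smul, hx]
  have hfu : f u ≤ max M 0 * g u := by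
    have hMu : f u / g u ≤ M := (le_abs_self _).trans (hM u hu)
    rw [div_le_iff₀ (hg_sphere u hu)] at hMu
    exact hMu.trans (mul_le_mul_of_nonneg_right (le_max_left _ _) (hg_sphere u hu).le)
  rw [hxu, hf_smul, hg_smul, mul_left_comm]
  exact mul_le_mul_of_nonneg_left hfu (sq_nonneg _)

theorem setIntegral_closedBall_eq_pow_mul_setIntegral_comp {E F : Type*} [NormedAddCommGroup E]
    [NormedSpace ℝ E] [MeasurableSpace E] [BorelSpace E] [FiniteDimensional ℝ E]
    [NormedAddCommGroup F] [NormedSpace ℝ F] (μ : Measure E) [μ.IsAddHaarMeasure]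
    (f : E → F) (c : E) {h : ℝ} (hh : 0 < h) (r : ℝ) :
    ∫ y in closedBall c (h * r), f y ∂μ
      = h ^ Module.finrank ℝ E • ∫ x in closedBall 0 r, f (c + h • x) ∂μ := by
  have hscale := Measure.setIntegral_comp_smul_of_pos μ (fun y => f (c + y)) (closedBall 0 r) hh
  have htranslate := (measurePreserving_add_left μ c).setIntegral_preimage_emb
    (measurableEmbedding_addLeft c) f (closedBall c (h * r))
  rw [smul_closedBall' hh.ne', smul_zero, Real.norm_of_nonneg hh.le] at hscale
  rw [preimage_add_closedBall, sub_self] at htranslate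
  rw [hscale, htranslate, smul_smul, mul_inv_cancel₀ (pow_pos hh _).ne', one_smul]

theorem subset_closedBall_diam_add_diam {X : Type*} [PseudoMetricSpace X] {A B : Set X}
    (hA : Bornology.IsBounded A) (hB : Bornology.IsBounded B) (hAB : (A ∩ B).Nonempty) {c : X}
    (hc : c ∈ B) : A ⊆ closedBall c (diam A + diam B) := fun _ hx =>
  (dist_le_diam_of_mem (hA.union hB) (Or.inl hx) (Or.inr hc)).trans (diam_union' hAB)

namespace MvPolynomial

section AffineSubst

variable {σ τ R : Type*} [CommSemiring R]

theorem totalDegree_aeval_le_of_totalDegree_le_one {g : σ → MvPolynomial τ R}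
    (hg : ∀ i, (g i).totalDegree ≤ 1) (P : MvPolynomial σ R) :
    (aeval g P).totalDegree ≤ P.totalDegree := by
  conv_lhs => rw [P.as_sum, map_sum]
  refine totalDegree_finsetSum_le fun s hs => ?_
  rw [aeval_monomial, ← C_eq_algebraMap]
  refine (totalDegree_mul _ _).trans ?_
  rw [totalDegree_C, zero_add, Finsupp.prod]
  calc (∏ i ∈ s.support, g i ^ s i).totalDegree
      ≤ ∑ i ∈ s.support, s i * (g i).totalDegree :=
        (totalDegree_finsetProd _ _).trans (Finset.sum_le_sum fun i _ => totalDegree_pow _ _)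
    _ ≤ ∑ i ∈ s.support, s i := Finset.sum_le_sum fun i _ => by
        simpa using Nat.mul_le_mul_left (s i) (hg i)
    _ ≤ P.totalDegree := le_totalDegree hs

noncomputable def affineSubst (c : σ → R) (h : R) (P : MvPolynomial σ R) : MvPolynomial σ R :=
  aeval (fun j => C (c j) + C h * X j) P

theorem eval_affineSubst (c : σ → R) (h : R) (P : MvPolynomial σ R) (x : σ → R) :
    eval x (affineSubst c h P) = eval (fun j => c j + h * x j) P :=
  (DFunLike.congr_fun (comp_aeval _ (aeval x)) P).trans (by simp)

theorem totalDegree_affineSubst_le (c : σ → R) (h : R) (P : MvPolynomial σ R) :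
    (affineSubst c h P).totalDegree ≤ P.totalDegree := by
  refine totalDegree_aeval_le_of_totalDegree_le_one (fun j => ?_) P
  refine (totalDegree_add _ _).trans (max_le ?_ ?_)
  · simp
  · rw [C_mul_X_eq_monomial]
    exact (totalDegree_monomial_le _ _).trans (by simp)

end AffineSubst

variable {ι : Type*}

theorem continuous_eval_euclidean (P : MvPolynomial ι ℝ) :
    Continuous fun x : EuclideanSpace ℝ ι => eval (fun j => x j) P :=
  (continuous_eval P).comp (PiLp.continuous_ofLp 2 _)

theorem continuous_eval_euclidean_linearMap {κ : Type*} [Fintype κ]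
    (φ : (κ → ℝ) →ₗ[ℝ] MvPolynomial ι ℝ) :
    Continuous fun p : (κ → ℝ) × EuclideanSpace ℝ ι => eval (fun j => p.2 j) (φ p.1) := by
  classical
  have hcont : Continuous fun p : (κ → ℝ) × EuclideanSpace ℝ ι =>
      ∑ i, p.1 i * eval (fun j => p.2 j) (φ fun k => if i = k then 1 else 0) :=
    continuous_finsetSum _ fun i _ =>
      ((continuous_apply i).comp continuous_fst).mul
        ((continuous_eval_euclidean _).comp continuous_snd)
  refine hcont.congr fun p => ?_
  rw [φ.pi_apply_eq_sum_univ p.1, map_sum]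
  simp only [smul_eval]

variable [Fintype ι]

theorem eq_zero_of_eval_euclidean_eq_zero_on_isOpen {U : Set (EuclideanSpace ℝ ι)} (hU : IsOpen U)
    (hU_ne : U.Nonempty) {P : MvPolynomial ι ℝ} (hP : ∀ x ∈ U, eval (fun j => x j) P = 0) :
    P = 0 := by
  obtain ⟨x₀, hx₀⟩ := hU_ne
  have hzero := (AnalyticOnNhd.eval_continuousLinearMap
    (PiLp.continuousLinearEquiv 2 ℝ fun _ : ι => ℝ).toContinuousLinearMap P
    ).eqOn_zero_of_preconnected_of_eventuallyEq_zero isPreconnected_univ (Set.mem_univ x₀)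
    (Filter.eventually_of_mem (hU.mem_nhds hx₀) hP)
  exact funext fun x => by
    simpa [PiLp.coe_continuousLinearEquiv] using hzero (Set.mem_univ (WithLp.toLp 2 x))

theorem integrableOn_eval_euclidean_sq (P : MvPolynomial ι ℝ) {s : Set (EuclideanSpace ℝ ι)}
    (hs : IsCompact s) : IntegrableOn (fun x => eval (fun j => x j) P ^ 2) s :=
  ((continuous_eval_euclidean P).pow 2).continuousOn.integrableOn_compact hs

theorem setIntegral_eval_euclidean_sq_mono (P : MvPolynomial ι ℝ)
    {s t : Set (EuclideanSpace ℝ ι)} (hst : s ⊆ t) (ht : IsCompact t) :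
    ∫ x in s, eval (fun j => x j) P ^ 2 ≤ ∫ x in t, eval (fun j => x j) P ^ 2 :=
  setIntegral_mono_set (integrableOn_eval_euclidean_sq P ht) (ae_of_all _ fun _ => sq_nonneg _)
    hst.eventuallyLE

theorem setIntegral_eval_euclidean_sq_pos {B : Set (EuclideanSpace ℝ ι)} (hB : IsCompact B)
    (hB_int : (interior B).Nonempty) {P : MvPolynomial ι ℝ} (hP : P ≠ 0) :
    0 < ∫ x in B, eval (fun j => x j) P ^ 2 := by
  rw [setIntegral_pos_iff_support_of_nonneg_ae (ae_of_all _ fun x => sq_nonneg _)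
    (integrableOn_eval_euclidean_sq P hB)]
  set U := interior B ∩ {x | eval (fun j => x j) P ≠ 0}
  have hU_open : IsOpen U :=
    isOpen_interior.inter (isOpen_ne_fun (continuous_eval_euclidean P) continuous_const)
  have hU_ne : U.Nonempty := by
    by_contra hU
    refine hP (eq_zero_of_eval_euclidean_eq_zero_on_isOpen isOpen_interior hB_int fun x hx => ?_)
    by_contra hPx
    exact hU ⟨x, hx, hPx⟩
  exact (hU_open.measure_pos volume hU_ne).trans_le
    (measure_mono fun x hx => ⟨pow_ne_zero 2 hx.2, interior_subset hx.1⟩)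

theorem exists_setIntegral_eval_euclidean_sq_le (l : ℕ) {A B : Set (EuclideanSpace ℝ ι)}
    (hA : IsCompact A) (hB : IsCompact B) (hB_int : (interior B).Nonempty) :
    ∃ C, 0 ≤ C ∧ ∀ P : MvPolynomial ι ℝ, P.totalDegree ≤ l →
      ∫ x in A, eval (fun j => x j) P ^ 2 ≤ C * ∫ x in B, eval (fun j => x j) P ^ 2 := by
  let V := restrictTotalDegree ι ℝ l
  let b := Module.finBasis ℝ V
  let φ : (Fin (Module.finrank ℝ V) → ℝ) →ₗ[ℝ] MvPolynomial ι ℝ :=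
    V.subtype ∘ₗ b.equivFun.symm.toLinearMap
  have hφ : Function.Injective φ := Subtype.val_injective.comp b.equivFun.symm.injective
  let F (s : Set (EuclideanSpace ℝ ι)) (c : Fin (Module.finrank ℝ V) → ℝ) : ℝ :=
    ∫ x in s, eval (fun j => x j) (φ c) ^ 2
  have hF_cont {s} (hs : IsCompact s) : Continuous (F s) :=
    continuous_parametric_integral_of_continuous
      ((continuous_eval_euclidean_linearMap φ).pow 2) hs
  have hF_smul (s) (t : ℝ) (c) : F s (t • c) = t ^ 2 * F s c := by
    simp only [F, map_smul, smul_eval, mul_pow, integral_const_mul]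
  obtain ⟨C, hC, hFC⟩ := exists_nonneg_forall_le_mul_of_sq_homogeneous (hF_cont hA) (hF_cont hB)
    (hF_smul A) (hF_smul B) fun c hc =>
      setIntegral_eval_euclidean_sq_pos hB hB_int ((map_ne_zero_iff φ hφ).2 hc)
  refine ⟨C, hC, fun P hP => ?_⟩
  obtain ⟨c, rfl⟩ : ∃ c, φ c = P :=
    ⟨b.equivFun ⟨P, (mem_restrictTotalDegree _ _ _).2 hP⟩, by simp [φ]⟩
  exact hFC c

theorem exists_setIntegral_eval_euclidean_sq_closedBall_le (l : ℕ) (R : ℝ) {r : ℝ}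
    (hr : 0 < r) :
    ∃ C, 0 ≤ C ∧ ∀ P : MvPolynomial ι ℝ, P.totalDegree ≤ l →
      ∀ (c : EuclideanSpace ℝ ι) {h : ℝ}, 0 < h →
        ∫ y in closedBall c (h * R), eval (fun j => y j) P ^ 2
          ≤ C * ∫ y in closedBall c (h * r), eval (fun j => y j) P ^ 2 := by
  have h_int : (interior (closedBall (0 : EuclideanSpace ℝ ι) r)).Nonempty :=
    ⟨0, ball_subset_interior_closedBall (mem_ball_self hr)⟩
  obtain ⟨C, hC, hCP⟩ := exists_setIntegral_eval_euclidean_sq_le l (isCompact_closedBall 0 R)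
    (isCompact_closedBall 0 r) h_int
  refine ⟨C, hC, fun P hP c h hh => ?_⟩
  have hQ (x : EuclideanSpace ℝ ι) :
      eval (fun j => (c + h • x) j) P = eval (fun j => x j) (affineSubst (fun j => c j) h P) := by
    simp [eval_affineSubst]
  simp only [setIntegral_closedBall_eq_pow_mul_setIntegral_comp volume _ c hh, hQ, smul_eq_mul]
  rw [mul_left_comm]
  exact mul_le_mul_of_nonneg_left (hCP _ ((totalDegree_affineSubst_le _ _ _).trans hP))
    (pow_nonneg hh.le _)

end MvPolynomial

/-- Neighboring-element inverse estimate: for fixed `d ≥ 1`, `l` and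
`ρ ∈ (0,1]` there is `C = C(d,l,ρ)` such that for every `h > 0` and every pair of
shape-regular simplices `K₁ = convexHull({a} ∪ S)` and `K₂ = convexHull({b} ∪ S)`
sharing the facet `F = convexHull S` (each of diameter `≤ h` and containing a ball of
radius `ρh`), and every polynomial `q` of degree `≤ l`,
`∫_{K₁} q² ≤ C (h² ∫_{K₁} ‖∇q‖² + ∫_{K₂} q²)`. -/
theorem neighboring_element_inverse_estimate
    (d l : ℕ) (hd : 1 ≤ d) (ρ : ℝ) (hρ : ρ ∈ Set.Ioc (0 : ℝ) 1) :
    ∃ C : ℝ, ∀ (h : ℝ), 0 < h →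
      ∀ (a b : EuclideanSpace ℝ (Fin d)) (S : Fin d → EuclideanSpace ℝ (Fin d)),
        AffineIndependent ℝ (Fin.cons a S : Fin (d + 1) → EuclideanSpace ℝ (Fin d)) →
        AffineIndependent ℝ (Fin.cons b S : Fin (d + 1) → EuclideanSpace ℝ (Fin d)) →
      ∀ (K₁ K₂ : Set (EuclideanSpace ℝ (Fin d))),
        K₁ = convexHull ℝ (insert a (Set.range S)) →
        K₂ = convexHull ℝ (insert b (Set.range S)) →
        Metric.diam K₁ ≤ h → Metric.diam K₂ ≤ h →
        (∃ c₁ : EuclideanSpace ℝ (Fin d), Metric.ball c₁ (ρ * h) ⊆ K₁) →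
        (∃ c₂ : EuclideanSpace ℝ (Fin d), Metric.ball c₂ (ρ * h) ⊆ K₂) →
      ∀ (q : EuclideanSpace ℝ (Fin d) → ℝ),
        (∃ P : MvPolynomial (Fin d) ℝ, P.totalDegree ≤ l ∧
          ∀ y, q y = MvPolynomial.eval (fun j => y j) P) →
        (∫ y in K₁, (q y) ^ 2) ≤
          C * (h ^ 2 * (∫ y in K₁, ‖gradient q y‖ ^ 2) + ∫ y in K₂, (q y) ^ 2) := by
  obtain ⟨C, hC, hCP⟩ :=
    MvPolynomial.exists_setIntegral_eval_euclidean_sq_closedBall_le (ι := Fin d) l 2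
      (half_pos hρ.1)
  refine ⟨C, fun h hh a b S _ _ K₁ K₂ hK₁ hK₂ hdiam₁ hdiam₂ _ ⟨c, hc⟩ q ⟨P, hP, hq⟩ => ?_⟩
  obtain rfl : q = _ := funext hq
  have hK₁_cpt : IsCompact K₁ := by
    rw [hK₁]; exact ((Set.finite_range S).insert a).isCompact_convexHull ℝ
  have hK₂_cpt : IsCompact K₂ := by
    rw [hK₂]; exact ((Set.finite_range S).insert b).isCompact_convexHull ℝ
  have hvertex (p) : S ⟨0, hd⟩ ∈ convexHull ℝ (insert p (Set.range S)) :=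
    subset_convexHull ℝ _ (Set.mem_insert_of_mem _ (Set.mem_range_self _))
  have hK₁_sub : K₁ ⊆ closedBall c (h * 2) :=
    (subset_closedBall_diam_add_diam hK₁_cpt.isBounded hK₂_cpt.isBounded
      ⟨_, hK₁ ▸ hvertex a, hK₂ ▸ hvertex b⟩ (hc (mem_ball_self (mul_pos hρ.1 hh)))).trans
      (closedBall_subset_closedBall (by linarith))
  have hK₂_sup : closedBall c (h * (ρ / 2)) ⊆ K₂ :=
    (closedBall_subset_ball (by nlinarith [hρ.1])).trans hc
  calc ∫ y in K₁, MvPolynomial.eval (fun j => y j) P ^ 2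
      ≤ ∫ y in closedBall c (h * 2), MvPolynomial.eval (fun j => y j) P ^ 2 :=
        MvPolynomial.setIntegral_eval_euclidean_sq_mono P hK₁_sub (isCompact_closedBall _ _)
    _ ≤ C * ∫ y in closedBall c (h * (ρ / 2)), MvPolynomial.eval (fun j => y j) P ^ 2 :=
        hCP P hP c hh
    _ ≤ C * ∫ y in K₂, MvPolynomial.eval (fun j => y j) P ^ 2 :=
        mul_le_mul_of_nonneg_left
          (MvPolynomial.setIntegral_eval_euclidean_sq_mono P hK₂_sup hK₂_cpt) hC
    _ ≤ _ := by
        gcongr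
        exact le_add_of_nonneg_left (by positivity)
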